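/- arXiv:1511.07532 — 2 statements merged into one kernel-verified Lean document; each statement's English description precedes it below -/
import Mathlib

section
/- Let c ≥ 1 be a real number, b ≥ 2 an integer, A ⊆ ℕ a set of positive integers, and d_{b,c,k} the total number of base-b digits in the concatenation, for n = 1, ..., 2b^{k-1} − 1, of the base-b digit string of n repeated ⌊c^{ℓ_b(n)}⌋ times. If there is a positive constant r such that for all sufficiently large k, m_{1,b}(ξ_{ℕ∖A,b,c}; d_{b,c,k}) − d_{b,c,k}/b ≥ r·(cb)^k, then limsup_{n→∞} (m_{1,b}(ξ_{ℕ∖A,b,c}; n) − n/b)/√(2n log log n) = +∞. -/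
open Filter

/-- The `i`-th digit (starting from `i = 0`) of the base-`b` expansion of the real `ξ`. -/
noncomputable def digitOf (b : ℕ) (ξ : ℝ) (i : ℕ) : ℕ :=
  (⌊ξ * (b : ℝ) ^ (i + 1)⌋).toNat % b

/-- `m_{k,b}(ξ; n)`: the number of occurrences of the digit `k` among the first `n`
base-`b` digits of `ξ`. -/
noncomputable def digCount (b : ℕ) (ξ : ℝ) (k n : ℕ) : ℕ :=
  ((Finset.range n).filter fun i => digitOf b ξ i = k).card

/-- The ratio appearing in the definition of (simple) strong normality. -/
noncomputable def snRatio (b : ℕ) (ξ : ℝ) (k n : ℕ) : ℝ :=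
  ((digCount b ξ k n : ℝ) - (n : ℝ) / b) / Real.sqrt (2 * n * Real.log (Real.log n))

/-- `ξ` is simply strongly normal to base `b`. -/
def SimplyStronglyNormal (b : ℕ) (ξ : ℝ) : Prop :=
  ∀ k < b,
    Filter.atTop.limsup (fun n : ℕ => (snRatio b ξ k n : EReal))
        = ((Real.sqrt ((b : ℝ) - 1) / b : ℝ) : EReal) ∧
    Filter.atTop.liminf (fun n : ℕ => (snRatio b ξ k n : EReal))
        = ((-(Real.sqrt ((b : ℝ) - 1) / b) : ℝ) : EReal)

/-- `ξ` is strongly normal to base `b`: simply strongly normal to base `b^m` for all `m ≥ 1`. -/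
def StronglyNormal (b : ℕ) (ξ : ℝ) : Prop :=
  ∀ m : ℕ, 1 ≤ m → SimplyStronglyNormal (b ^ m) ξ

/-- `ℓ_b(n)`: the number of base-`b` digits of `n`. -/
def lenb (b n : ℕ) : ℕ := (Nat.digits b n).length

/-- The base-`b` digit string (most significant digit first) of `a`,
repeated `⌊c ^ ℓ_b(a)⌋` times. -/
noncomputable def block (b : ℕ) (c : ℝ) (a : ℕ) : List ℕ :=
  (List.replicate ⌊c ^ lenb b a⌋₊ (Nat.digits b a).reverse).flatten

/-- The concatenation of the blocks of the first `N` elements of `B` (in increasing order). -/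
noncomputable def prefixDigits (b : ℕ) (c : ℝ) (B : Set ℕ) (N : ℕ) : List ℕ :=
  ((List.range N).map fun n => block b c (Nat.nth (· ∈ B) n)).flatten

/-- The `i`-th digit of the infinite concatenation of the blocks of the elements of `B`. -/
noncomputable def xiDigit (b : ℕ) (c : ℝ) (B : Set ℕ) (i : ℕ) : ℕ :=
  (prefixDigits b c B (i + 1)).getD i 0

/-- `ξ_{B,b,c}`: the real number whose base-`b` expansion is the concatenation, over the
elements `a` of `B` in increasing order, of the base-`b` digits of `a` repeated
`⌊c ^ ℓ_b(a)⌋` times. -/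
noncomputable def xiReal (b : ℕ) (c : ℝ) (B : Set ℕ) : ℝ :=
  ∑' i : ℕ, (xiDigit b c B i : ℝ) / (b : ℝ) ^ (i + 1)

/-- `A(x)`: the number of elements of `A` that are at most `x`. -/
noncomputable def countA (A : Set ℕ) (x : ℕ) : ℕ := Set.ncard {n ∈ A | n ≤ x}

/-- `d_{b,c,k}`: the total number of base-`b` digits in the concatenation, for
`n = 1, …, 2·b^(k-1) − 1`, of the base-`b` digit string of `n` repeated `⌊c^{ℓ_b(n)}⌋` times. -/
noncomputable def dTotal (b : ℕ) (c : ℝ) (k : ℕ) : ℕ :=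
  ∑ n ∈ Finset.Icc 1 (2 * b ^ (k - 1) - 1), ⌊c ^ lenb b n⌋₊ * lenb b n

/-- The closed formula for `d_{b,c,k}`. -/
noncomputable def dFormula (b : ℕ) (c : ℝ) (k : ℕ) : ℕ :=
  ⌊c ^ k⌋₊ * k * b ^ (k - 1) +
    ∑ n ∈ Finset.Icc 1 (k - 1), ⌊c ^ n⌋₊ * n * b ^ (n - 1) * (b - 1)

/-!
Along the subsequence `n = d_{b,c,k}` the excess of ones is at least `r (cb)^k`, while
`d_{b,c,k} ≤ k (cb)^k`, so `log log d_{b,c,k} = O(k)` and the normalizing factor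
`√(2 d log log d)` is `O(k (cb)^{k/2})`. The ratio therefore grows like `(cb)^{k/2} / k`,
which tends to infinity because `cb ≥ 2`.
-/

open Real

lemma tendsto_pow_div_self_atTop {s : ℝ} (hs : 1 < s) :
    Tendsto (fun k : ℕ => s ^ k / k) atTop atTop := by
  have hpos : ∀ᶠ k : ℕ in atTop, 0 < (k : ℝ) ^ 1 / s ^ k :=
    (eventually_gt_atTop 0).mono fun k hk => by positivity
  have hzero := tendsto_nhdsWithin_iff.2
    ⟨tendsto_pow_const_div_const_pow_of_one_lt 1 hs, hpos⟩
  simpa [Pi.inv_def] using hzero.inv_tendsto_nhdsGT_zero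

lemma log_log_le_of_le_mul_pow {Q x : ℝ} {k : ℕ} (hQ : 0 < Q) (hx : 1 ≤ x)
    (hxk : x ≤ k * Q ^ k) : log (log x) ≤ k * (1 + log Q) := by
  have hk : (0 : ℝ) < k := by
    by_contra! h
    nlinarith [pow_pos hQ k]
  calc log (log x) ≤ log x := log_le_self (log_nonneg hx)
    _ ≤ log (k * Q ^ k) := log_le_log (by linarith) hxk
    _ = log k + k * log Q := by rw [log_mul hk.ne' (pow_pos hQ k).ne', log_pow]
    _ ≤ k * (1 + log Q) := by linarith [log_le_self hk.le]

lemma sqrt_two_mul_log_log_le {Q x : ℝ} {k : ℕ} (hQ : 1 ≤ Q) (hx : 1 ≤ x)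
    (hxk : x ≤ k * Q ^ k) :
    √(2 * x * log (log x)) ≤ √(2 * (1 + log Q)) * k * √Q ^ k := by
  have hlogQ : 0 ≤ 1 + log Q := by linarith [log_nonneg hQ]
  have hll := log_log_le_of_le_mul_pow (by linarith) hx hxk
  rw [sqrt_le_left (by positivity), mul_pow, mul_pow, ← pow_mul, mul_comm k 2, pow_mul,
    sq_sqrt (by linarith), sq_sqrt (by linarith)]
  calc 2 * x * log (log x) ≤ 2 * x * (k * (1 + log Q)) := by gcongr
    _ ≤ 2 * (k * Q ^ k) * (k * (1 + log Q)) := by gcongr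
    _ = 2 * (1 + log Q) * k ^ 2 * Q ^ k := by ring

lemma tendsto_div_sqrt_two_mul_log_log_atTop {Q r : ℝ} (hQ : 1 < Q) (hr : 0 < r)
    {d : ℕ → ℕ} {e : ℕ → ℝ} (hd : Tendsto d atTop atTop)
    (hdQ : ∀ᶠ k in atTop, (d k : ℝ) ≤ k * Q ^ k) (he : ∀ᶠ k in atTop, r * Q ^ k ≤ e k) :
    Tendsto (fun k => e k / √(2 * d k * log (log (d k)))) atTop atTop := by
  set C := √(2 * (1 + log Q))
  have hQ0 : 0 < Q := zero_lt_one.trans hQ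
  have hC : 0 < C := sqrt_pos.2 (by linarith [log_nonneg hQ.le])
  have hs : 1 < √Q := by rwa [lt_sqrt zero_le_one, one_pow]
  refine tendsto_atTop_mono' _ ?_
    ((tendsto_pow_div_self_atTop hs).const_mul_atTop (div_pos hr hC))
  filter_upwards [he, hdQ, hd.eventually_ge_atTop 3, eventually_ge_atTop 1]
    with k hek hdk hd3 hk
  have hd3' : (3 : ℝ) ≤ d k := by exact_mod_cast hd3
  have hloglog : 0 < log (log (d k)) := by
    refine log_pos ?_
    rw [lt_log_iff_exp_lt (by linarith)]
    linarith [exp_one_lt_d9]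
  have hden : 0 < √(2 * d k * log (log (d k))) := sqrt_pos.2 (by positivity)
  have hQk : Q ^ k = √Q ^ k * √Q ^ k := by rw [← mul_pow, mul_self_sqrt (by linarith)]
  have hk' : (0 : ℝ) < k := by exact_mod_cast hk
  calc r / C * (√Q ^ k / k) = r * Q ^ k / (C * k * √Q ^ k) := by
        rw [hQk]; field_simp
    _ ≤ e k / √(2 * d k * log (log (d k))) :=
        div_le_div₀ ((mul_pos hr (pow_pos hQ0 k)).le.trans hek) hek hden
          (sqrt_two_mul_log_log_le hQ.le (by linarith) hdk)

lemma limsup_coe_eq_top_of_tendsto_comp {u : ℕ → ℝ} {φ : ℕ → ℕ} (hφ : Tendsto φ atTop atTop)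
    (hu : Tendsto (u ∘ φ) atTop atTop) : atTop.limsup (fun n => (u n : EReal)) = ⊤ := by
  refine EReal.eq_top_iff_forall_lt _ |>.2 fun M => ?_
  have hfreq : ∃ᶠ n in atTop, M + 1 ≤ u n :=
    hφ.frequently (hu.eventually_ge_atTop (M + 1)).frequently
  calc (M : EReal) < (M + 1 : ℝ) := EReal.coe_lt_coe_iff.2 (lt_add_one M)
    _ ≤ _ := le_limsup_of_frequently_le' (hfreq.mono fun n hn => EReal.coe_le_coe_iff.2 hn)

lemma one_le_lenb {b n : ℕ} (hn : n ≠ 0) : 1 ≤ lenb b n :=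
  List.length_pos_iff.2 (Nat.digits_ne_nil_iff_ne_zero.2 hn)

lemma le_dTotal {b : ℕ} {c : ℝ} (hb : 2 ≤ b) (hc : 1 ≤ c) (k : ℕ) : k ≤ dTotal b c k := by
  have hterm : ∀ n ∈ Finset.Icc 1 (2 * b ^ (k - 1) - 1), 1 ≤ ⌊c ^ lenb b n⌋₊ * lenb b n :=
    fun n hn => one_le_mul (Nat.le_floor (by exact_mod_cast one_le_pow₀ hc))
      (one_le_lenb (by simp at hn; omega))
  have hcard := Finset.card_nsmul_le_sum _ _ _ hterm
  have hpow : k - 1 < b ^ (k - 1) := Nat.lt_pow_self (by omega)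
  simp only [Nat.card_Icc, smul_eq_mul, mul_one] at hcard
  unfold dTotal
  omega

lemma dTotal_le_mul_pow {b : ℕ} {c : ℝ} (hb : 2 ≤ b) (hc : 1 ≤ c) {k : ℕ} (hk : 1 ≤ k) :
    (dTotal b c k : ℝ) ≤ k * (c * b) ^ k := by
  have hcard : 2 * b ^ (k - 1) - 1 < b ^ k := by
    have : b * b ^ (k - 1) = b ^ k := by rw [← pow_succ']; congr 1; omega
    have : 2 * b ^ (k - 1) ≤ b * b ^ (k - 1) := Nat.mul_le_mul_right _ hb
    have : 0 < b ^ k := by positivity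
    omega
  have hterm : ∀ n ∈ Finset.Icc 1 (2 * b ^ (k - 1) - 1),
      (⌊c ^ lenb b n⌋₊ * lenb b n : ℝ) ≤ c ^ k * k := by
    intro n hn
    have hlen : lenb b n ≤ k :=
      (Nat.digits_length_le_iff (by omega) n).2 ((Finset.mem_Icc.1 hn).2.trans_lt hcard)
    gcongr
    · exact (Nat.floor_le (by positivity)).trans (pow_le_pow_right₀ hc hlen)
  unfold dTotal
  push_cast
  calc _ ≤ ((Finset.Icc 1 (2 * b ^ (k - 1) - 1)).card : ℝ) * (c ^ k * k) := by
        simpa using Finset.sum_le_card_nsmul _ _ _ hterm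
    _ ≤ (b ^ k : ℕ) * (c ^ k * k) := by
        gcongr
        rw [Nat.card_Icc]
        omega
    _ = k * (c * b) ^ k := by push_cast; ring

theorem limsup_eq_top_of_excess_ones_general (b : ℕ) (hb : 2 ≤ b) (c : ℝ) (hc : 1 ≤ c)
    (A : Set ℕ) (r : ℝ) (hr : 0 < r)
    (hyp : ∀ᶠ k : ℕ in Filter.atTop,
      r * (c * b) ^ k ≤
        (digCount b (xiReal b c {n : ℕ | 0 < n ∧ n ∉ A}) 1 (dTotal b c k) : ℝ)
          - (dTotal b c k : ℝ) / b) :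
    Filter.atTop.limsup
        (fun n : ℕ => (snRatio b (xiReal b c {n : ℕ | 0 < n ∧ n ∉ A}) 1 n : EReal))
      = ⊤ := by
  have hQ : 1 < c * b := by
    have : (2 : ℝ) ≤ b := by exact_mod_cast hb
    nlinarith
  have hd : Tendsto (dTotal b c) atTop atTop :=
    tendsto_atTop_mono (le_dTotal hb hc) tendsto_id
  exact limsup_coe_eq_top_of_tendsto_comp hd <|
    tendsto_div_sqrt_two_mul_log_log_atTop hQ hr hd
      ((eventually_ge_atTop 1).mono fun k hk => dTotal_le_mul_pow hb hc hk) hyp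

/-- If `m_{1,b}(ξ_{ℕ∖A,b,c}; d_{b,c,k}) - d_{b,c,k}/b ≥ r·(cb)^k` for some `r > 0` and all
large `k`, then the limsup in the definition of simple strong normality (for the digit `1`)
is `+∞`. -/
theorem limsup_eq_top_of_excess_ones (b : ℕ) (hb : 2 ≤ b) (c : ℝ) (hc : 1 ≤ c)
    (A : Set ℕ) (hA : 0 ∉ A) (r : ℝ) (hr : 0 < r)
    (hyp : ∀ᶠ k : ℕ in Filter.atTop,
      r * (c * b) ^ k ≤
        (digCount b (xiReal b c {n : ℕ | 0 < n ∧ n ∉ A}) 1 (dTotal b c k) : ℝ)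
          - (dTotal b c k : ℝ) / b) :
    Filter.atTop.limsup
        (fun n : ℕ => (snRatio b (xiReal b c {n : ℕ | 0 < n ∧ n ∉ A}) 1 n : EReal))
      = ⊤ :=
  limsup_eq_top_of_excess_ones_general b hb c hc A r hr hyp
end

section
/- For every integer b ≥ 2, the base-b Champernowne number ξ_{ℕ,b} ∈ (0,1), whose base-b expansion is obtained by concatenating the base-b digit strings of 1, 2, 3, ... in increasing order, is not simply strongly normal to the base b. -/
open Filter

/-!
Among the base-`b` digit strings of `0, 1, …, b^K - 1`, every digit value fills exactly a `1/b`
share of the non-leading positions, while the `b^K - 1` leading digits are never `0`. So if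
`n_K` is the total length of these strings, the digit `0` occurs `(n_K - (b^K - 1)) / b` times
among the first `n_K` digits of the Champernowne number: it falls short of `n_K / b` by
`(b^K - 1) / b`. Since `n_K ≤ K b^K`, the normalisation `√(2 n_K log log n_K)` is
`O(K b^(K/2)) = o(b^K)`, so the ratio tends to `-∞` along `n_K` and its `liminf` is `⊥`, not
`-√(b - 1) / b`.
-/

open Finset Topology Asymptotics

theorem sqrt_two_mul_log_log_le_s9 {b x : ℝ} {K : ℕ} (hb : 1 ≤ b) (hx : 1 ≤ x)
    (hxK : x ≤ K * b ^ K) :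
    √(2 * x * Real.log (Real.log x)) ≤ √(2 * (1 + Real.log b)) * (K * √b ^ K) := by
  have hbK : 1 ≤ b ^ K := one_le_pow₀ hb
  have hK : 1 ≤ (K : ℝ) := by
    rcases K with _ | K
    · simp at hxK; linarith
    · simp
  have hlogb : 0 ≤ Real.log b := Real.log_nonneg hb
  have hloglog : Real.log (Real.log x) ≤ K * (1 + Real.log b) := calc
    Real.log (Real.log x) ≤ Real.log x := Real.log_le_self (Real.log_nonneg hx)
    _ ≤ Real.log (K * b ^ K) := Real.log_le_log (by linarith) hxK
    _ = Real.log K + K * Real.log b := by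
      rw [Real.log_mul (by positivity) (by positivity), Real.log_pow]
    _ ≤ K * (1 + Real.log b) := by linarith [Real.log_le_self (by linarith : (0 : ℝ) ≤ K)]
  have hsq : (√(2 * (1 + Real.log b)) * (K * √b ^ K)) ^ 2
      = 2 * (K * b ^ K) * (K * (1 + Real.log b)) := by
    rw [mul_pow, mul_pow, ← pow_mul, mul_comm K 2, pow_mul, Real.sq_sqrt (by linarith),
      Real.sq_sqrt (by linarith)]
    ring
  rw [Real.sqrt_le_left (by positivity), hsq]
  calc 2 * x * Real.log (Real.log x) ≤ 2 * x * (K * (1 + Real.log b)) := by gcongr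
    _ ≤ 2 * (K * b ^ K) * (K * (1 + Real.log b)) := by gcongr

theorem isLittleO_sqrt_two_mul_log_log {b : ℝ} (hb : 1 < b) {n : ℕ → ℝ}
    (hn : Tendsto n atTop atTop) (hnK : ∀ K, n K ≤ K * b ^ K) :
    (fun K => √(2 * n K * Real.log (Real.log (n K)))) =o[atTop] fun K => b ^ K := by
  have hbig : (fun K => √(2 * n K * Real.log (Real.log (n K)))) =O[atTop]
      fun K : ℕ => (K : ℝ) ^ 1 * √b ^ K := by
    refine IsBigO.of_bound (√(2 * (1 + Real.log b))) ?_
    filter_upwards [hn.eventually_ge_atTop 1] with K hK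
    rw [Real.norm_of_nonneg (Real.sqrt_nonneg _), Real.norm_of_nonneg (by positivity), pow_one]
    exact sqrt_two_mul_log_log_le_s9 hb.le hK (hnK K)
  refine hbig.trans_isLittleO (isLittleO_pow_const_mul_const_pow_const_pow_of_norm_lt 1 ?_)
  rwa [Real.norm_of_nonneg (Real.sqrt_nonneg _), Real.sqrt_lt_self_iff]

theorem tendsto_div_atTop_of_isLittleO {α : Type*} {l : Filter α} {f g : α → ℝ}
    (h : f =o[l] g) (hf : ∀ᶠ x in l, 0 < f x) (hg : ∀ᶠ x in l, 0 < g x) :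
    Tendsto (fun x => g x / f x) l atTop := by
  have hpos : Tendsto (fun x => f x / g x) l (𝓝[>] 0) :=
    tendsto_nhdsWithin_iff.2 ⟨h.tendsto_div_nhds_zero, by
      filter_upwards [hf, hg] with x hfx hgx using div_pos hfx hgx⟩
  convert hpos.inv_tendsto_nhdsGT_zero using 2 with x
  simp

theorem tendsto_pow_sub_one_div_sqrt_two_mul_log_log {b : ℝ} (hb : 1 < b) {n : ℕ → ℝ}
    (hn : Tendsto n atTop atTop) (hnK : ∀ K, n K ≤ K * b ^ K) :
    Tendsto (fun K => (b ^ K - 1) / √(2 * n K * Real.log (Real.log (n K)))) atTop atTop := by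
  have hpow : (fun K : ℕ => b ^ K) =O[atTop] fun K => b ^ K - 1 := by
    refine IsBigO.of_bound 2 ?_
    filter_upwards [(tendsto_pow_atTop_atTop_of_one_lt hb).eventually_ge_atTop 2] with K hK
    rw [Real.norm_of_nonneg (by positivity), Real.norm_of_nonneg (by linarith)]
    linarith
  refine tendsto_div_atTop_of_isLittleO
    ((isLittleO_sqrt_two_mul_log_log hb hn hnK).trans_isBigO hpow) ?_ ?_
  · filter_upwards [hn.eventually_ge_atTop 3] with K hK
    have hlog : 1 < Real.log (n K) := by
      rw [Real.lt_log_iff_exp_lt (by linarith)]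
      linarith [Real.exp_one_lt_d9]
    exact Real.sqrt_pos.2 (by have := Real.log_pos hlog; positivity)
  · filter_upwards [eventually_ge_atTop 1] with K hK
    exact sub_pos.2 (one_lt_pow₀ hb (by omega))

theorem EReal.liminf_coe_eq_bot_of_tendsto_comp {α β : Type*} {l : Filter α} [l.NeBot]
    {f : Filter β} {u : β → ℝ} {φ : α → β} (hφ : Tendsto φ l f)
    (hu : Tendsto (u ∘ φ) l atBot) :
    liminf (fun x => (u x : EReal)) f = ⊥ := by
  refine (EReal.eq_bot_iff_forall_lt _).2 fun y => ?_
  have hfreq : ∃ᶠ x in f, u x ≤ y - 1 :=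
    hφ.frequently (hu.eventually_le_atBot (y - 1)).frequently
  calc liminf (fun x => (u x : EReal)) f ≤ ((y - 1 : ℝ) : EReal) :=
        liminf_le_of_frequently_le' (hfreq.mono fun x hx => EReal.coe_le_coe hx)
    _ < y := EReal.coe_lt_coe (by linarith)

namespace Real

variable {b : ℕ}

theorem mul_ofDigits (a : ℕ → Fin b) :
    b * ofDigits a = a 0 + ofDigits fun i => a (i + 1) := by
  have hb : (b : ℝ) ≠ 0 := by exact_mod_cast (Fin.pos (a 0)).ne'
  rw [ofDigits_eq_sum_add_ofDigits a 1, sum_range_one, ofDigitsTerm]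
  field_simp
  ring

theorem ofDigits_lt_one (hb : 1 < b) {a : ℕ → Fin b} {j : ℕ} (hj : (a j : ℕ) + 1 < b) :
    ofDigits a < 1 := by
  rw [← ofDigits_const_last_eq_one' hb]
  refine Summable.tsum_lt_tsum (i := j) (fun i => ?_) ?_ summable_ofDigitsTerm
    summable_ofDigitsTerm
  · unfold ofDigitsTerm
    gcongr
    exact_mod_cast Nat.le_sub_one_of_lt (a i).isLt
  · unfold ofDigitsTerm
    gcongr
    exact_mod_cast Nat.lt_sub_of_add_lt hj

theorem ofDigits_mul_pow_eq_floor_add (hb : 1 < b) {a : ℕ → Fin b}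
    (ha : ∀ n, ∃ j ≥ n, (a j : ℕ) + 1 < b) (n : ℕ) :
    ofDigits a * b ^ n = ⌊ofDigits a * b ^ n⌋₊ + ofDigits fun i => a (i + n) := by
  have htail : ∀ n, ofDigits (fun i => a (i + n)) < 1 := fun n => by
    obtain ⟨j, hjn, hj⟩ := ha n
    exact ofDigits_lt_one hb (j := j - n) (by rwa [Nat.sub_add_cancel hjn])
  induction n with
  | zero => simpa [Nat.floor_eq_zero] using htail 0
  | succ n ih =>
    set F := ⌊ofDigits a * b ^ n⌋₊
    have hmul := mul_ofDigits fun i => a (i + n)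
    simp only [zero_add, add_right_comm _ 1 n, add_assoc] at hmul
    have hstep : ofDigits a * b ^ (n + 1)
        = (b * F + a n : ℕ) + ofDigits fun i => a (i + (n + 1)) := by
      push_cast
      linear_combination (b : ℝ) * ih + hmul
    have hfloor :
        ⌊((b * F + a n : ℕ) : ℝ) + ofDigits fun i => a (i + (n + 1))⌋₊ = b * F + a n := by
      rw [add_comm, Nat.floor_add_natCast (ofDigits_nonneg _), Nat.floor_eq_zero.2 (htail _),
        zero_add]
    rw [hstep, hfloor]

theorem digitOf_ofDigits (hb : 1 < b) {a : ℕ → Fin b}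
    (ha : ∀ n, ∃ j ≥ n, (a j : ℕ) + 1 < b) (n : ℕ) :
    digitOf b (ofDigits a) n = a n := by
  have h := ofDigits_mul_pow_eq_floor_add hb ha
  have hstep :
      (⌊ofDigits a * b ^ (n + 1)⌋₊ : ℝ) = b * ⌊ofDigits a * b ^ n⌋₊ + a n := by
    have := mul_ofDigits fun i => a (i + n)
    simp only [zero_add, add_right_comm _ 1 n] at this
    linear_combination (b : ℝ) * h n - h (n + 1) + this
  rw [digitOf, Int.floor_toNat, (by exact_mod_cast hstep : ⌊ofDigits a * b ^ (n + 1)⌋₊ = _),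
    Nat.mul_add_mod, Nat.mod_eq_of_lt (a n).isLt]

end Real

theorem List.IsPrefix.getD {α : Type*} {l₁ l₂ : List α} (h : l₁ <+: l₂) {i : ℕ}
    (hi : i < l₁.length) (d : α) : l₁.getD i d = l₂.getD i d := by
  rw [List.getD_eq_getElem _ _ hi, List.getD_eq_getElem _ _ (hi.trans_le h.length_le),
    h.getElem hi]

theorem List.card_filter_getD_eq_count {α : Type*} [DecidableEq α] (l : List α) (d a : α) :
    #{i ∈ Finset.range l.length | l.getD i d = a} = l.count a := by
  induction l with
  | nil => simp
  | cons x l ih =>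
    rw [card_filter, List.length_cons, Finset.sum_range_succ', List.count_cons, ← ih, card_filter]
    simp

theorem Nat.nth_zero_lt (n : ℕ) : Nat.nth (0 < ·) n = n + 1 := by
  have hcount : Nat.count (0 < ·) (n + 1) = n := by simp [Nat.count_succ']
  simpa [hcount] using Nat.nth_count (p := (0 < ·)) (Nat.succ_pos n)

theorem Finset.sum_range_mul {M : Type*} [AddCommMonoid M] (f : ℕ → M) (b n : ℕ) :
    ∑ m ∈ range (b * n), f m = ∑ q ∈ range n, ∑ r ∈ range b, f (b * q + r) := by
  induction n with
  | zero => simp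
  | succ n ih => rw [mul_add_one, sum_range_add, ih, sum_range_succ]

def zeroDeficit (b m : ℕ) : ℤ := (b.digits m).length - b * (b.digits m).count 0

section zeroDeficit

variable {b : ℕ}

-- `0` has no digits, whence the correction at `q = r = 0`.
theorem zeroDeficit_mul_add (hb : 1 < b) (q : ℕ) {r : ℕ} (hr : r < b) :
    zeroDeficit b (b * q + r) = zeroDeficit b q + 1 - b * (if r = 0 then 1 else 0) +
      if q = 0 ∧ r = 0 then (b - 1 : ℤ) else 0 := by
  rcases eq_or_ne q 0 with rfl | hq <;> rcases eq_or_ne r 0 with rfl | hr0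
  · simp [zeroDeficit]
  all_goals
    rw [zeroDeficit, zeroDeficit, add_comm, Nat.digits_add b hb _ _ hr (by tauto),
      List.length_cons, List.count_cons]
    simp [*] <;> ring

theorem sum_range_zeroDeficit_mul_add (hb : 1 < b) (q : ℕ) :
    ∑ r ∈ range b, zeroDeficit b (b * q + r) =
      b * zeroDeficit b q + if q = 0 then (b - 1 : ℤ) else 0 := by
  rw [sum_congr rfl fun r hr => zeroDeficit_mul_add hb q (mem_range.1 hr)]
  simp only [mul_ite, mul_one, mul_zero, ite_and, sum_add_distrib, sum_sub_distrib, sum_const,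
    card_range, Int.nsmul_eq_mul, sum_ite_eq', mem_range, hb.pos, if_true, sum_ite_irrel]
  ring

theorem sum_range_pow_zeroDeficit (hb : 1 < b) (K : ℕ) :
    ∑ m ∈ range (b ^ K), zeroDeficit b m = b ^ K - 1 := by
  induction K with
  | zero => simp [zeroDeficit]
  | succ K ih =>
    rw [pow_succ', sum_range_mul, sum_congr rfl fun q _ => sum_range_zeroDeficit_mul_add hb q,
      sum_add_distrib, ← mul_sum, ih, sum_ite_eq' _ 0, if_pos (by simp; positivity)]
    ring

end zeroDeficit

def champernownePrefix (b N : ℕ) : List ℕ :=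
  ((List.range N).map fun n => (b.digits n).reverse).flatten

namespace champernownePrefix

variable {b : ℕ}

theorem succ (b N : ℕ) :
    champernownePrefix b (N + 1) = champernownePrefix b N ++ (b.digits N).reverse := by
  simp [champernownePrefix, List.range_succ]

theorem isPrefix (b : ℕ) {M N : ℕ} (h : M ≤ N) :
    champernownePrefix b M <+: champernownePrefix b N := by
  induction h with
  | refl => exact List.prefix_refl _
  | step _ ih => exact ih.trans (succ b _ ▸ List.prefix_append _ _)

theorem length_eq_sum (b N : ℕ) :
    (champernownePrefix b N).length = ∑ n ∈ range N, (b.digits n).length := by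
  induction N with
  | zero => rfl
  | succ N ih => simp [succ, sum_range_succ, ih]

theorem count_eq_sum (b k N : ℕ) :
    (champernownePrefix b N).count k = ∑ n ∈ range N, (b.digits n).count k := by
  induction N with
  | zero => rfl
  | succ N ih => simp [succ, sum_range_succ, ih]

theorem le_length (b N : ℕ) : N ≤ (champernownePrefix b (N + 1)).length := by
  induction N with
  | zero => exact Nat.zero_le _
  | succ N ih =>
    have : (b.digits (N + 1)).length ≠ 0 := by simp [Nat.digits_ne_nil_iff_ne_zero]
    rw [succ, List.length_append, List.length_reverse]
    omega

theorem lt_of_mem (hb : 1 < b) {N d : ℕ} (hd : d ∈ champernownePrefix b N) : d < b := by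
  simp only [champernownePrefix, List.mem_flatten, List.mem_map] at hd
  obtain ⟨_, ⟨n, -, rfl⟩, hd⟩ := hd
  exact Nat.digits_lt_base hb (List.mem_reverse.1 hd)

theorem length_pow_le (hb : 1 < b) (K : ℕ) :
    (champernownePrefix b (b ^ K)).length ≤ K * b ^ K := by
  rw [length_eq_sum, mul_comm]
  simpa using sum_le_card_nsmul _ _ K fun m hm =>
    (Nat.digits_length_le_iff hb m).2 (mem_range.1 hm)

theorem pow_sub_one_le_length (hb : 1 < b) (K : ℕ) :
    b ^ K - 1 ≤ (champernownePrefix b (b ^ K)).length := by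
  simpa [Nat.sub_add_cancel (Nat.one_le_pow K b (by omega))] using le_length b (b ^ K - 1)

theorem tendsto_length_pow (hb : 1 < b) :
    Tendsto (fun K => (champernownePrefix b (b ^ K)).length) atTop atTop :=
  tendsto_atTop_mono (fun K => (Nat.le_sub_one_of_lt (Nat.lt_pow_self hb)).trans
    (pow_sub_one_le_length hb K)) tendsto_id

theorem length_sub_mul_count_zero (hb : 1 < b) (K : ℕ) :
    ((champernownePrefix b (b ^ K)).length : ℤ) - b * (champernownePrefix b (b ^ K)).count 0 =
      b ^ K - 1 := by
  rw [length_eq_sum, count_eq_sum, ← sum_range_pow_zeroDeficit hb K]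
  push_cast
  rw [mul_sum, ← sum_sub_distrib]
  rfl

end champernownePrefix

section Champernowne

variable {b : ℕ}

theorem prefixDigits_one_setOf_pos (b N : ℕ) :
    prefixDigits b 1 {n | 0 < n} N = champernownePrefix b (N + 1) := by
  simp [prefixDigits, champernownePrefix, List.range_succ_eq_map, block, Nat.nth_zero_lt,
    Function.comp_def]

theorem xiDigit_eq_getD {N i : ℕ} (hi : i < (champernownePrefix b N).length) :
    xiDigit b 1 {n | 0 < n} i = (champernownePrefix b N).getD i 0 := by
  have hi' : i < (champernownePrefix b (i + 2)).length :=
    (Nat.lt_succ_self i).trans_le (champernownePrefix.le_length b (i + 1))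
  rw [xiDigit, prefixDigits_one_setOf_pos]
  rcases le_total (i + 2) N with h | h
  · exact (champernownePrefix.isPrefix b h).getD hi' 0
  · exact ((champernownePrefix.isPrefix b h).getD hi 0).symm

theorem xiDigit_lt (hb : 1 < b) (i : ℕ) : xiDigit b 1 {n | 0 < n} i < b := by
  have hi : i < (champernownePrefix b (i + 2)).length :=
    (Nat.lt_succ_self i).trans_le (champernownePrefix.le_length b (i + 1))
  rw [xiDigit_eq_getD hi, List.getD_eq_getElem _ _ hi]
  exact champernownePrefix.lt_of_mem hb (List.getElem_mem hi)

theorem exists_xiDigit_eq_zero (hb : 1 < b) (n : ℕ) :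
    ∃ j ≥ n, xiDigit b 1 {n | 0 < n} j = 0 := by
  set L := (champernownePrefix b (b ^ (n + 1))).length
  have hrev : (b.digits (b ^ (n + 1))).reverse = 1 :: List.replicate (n + 1) 0 := by
    simpa [Nat.digits_of_lt b 1 one_ne_zero hb] using
      congrArg List.reverse (Nat.digits_base_pow_mul (k := n + 1) hb one_pos)
  have hL : n ≤ L := by
    have := Nat.lt_pow_self (n := n + 1) hb
    have := champernownePrefix.pow_sub_one_le_length hb (n + 1)
    omega
  refine ⟨L + 1, by omega, ?_⟩
  rw [xiDigit_eq_getD (N := b ^ (n + 1) + 1)]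
  · rw [champernownePrefix.succ, List.getD_append_right _ _ _ _ (by omega), hrev]
    simp [L]
  · simp [champernownePrefix.succ, hrev, L]

theorem xiReal_eq_ofDigits (hb : 1 < b) :
    xiReal b 1 {n | 0 < n} = Real.ofDigits fun i => ⟨_, xiDigit_lt hb i⟩ := by
  simp [xiReal, Real.ofDigits, Real.ofDigitsTerm, div_eq_mul_inv]

theorem digitOf_xiReal (hb : 1 < b) (i : ℕ) :
    digitOf b (xiReal b 1 {n | 0 < n}) i = xiDigit b 1 {n | 0 < n} i := by
  rw [xiReal_eq_ofDigits hb, Real.digitOf_ofDigits hb]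
  intro n
  obtain ⟨j, hjn, hj⟩ := exists_xiDigit_eq_zero hb n
  exact ⟨j, hjn, by simp [hj, hb]⟩

theorem digCount_xiReal_length (hb : 1 < b) (k N : ℕ) :
    digCount b (xiReal b 1 {n | 0 < n}) k (champernownePrefix b N).length =
      (champernownePrefix b N).count k := by
  rw [digCount, ← List.card_filter_getD_eq_count _ 0]
  refine congrArg card (filter_congr fun i hi => ?_)
  rw [digitOf_xiReal hb, xiDigit_eq_getD (mem_range.1 hi)]

theorem tendsto_snRatio_xiReal_length_pow (hb : 1 < b) :
    Tendsto (fun K => snRatio b (xiReal b 1 {n | 0 < n}) 0 (champernownePrefix b (b ^ K)).length)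
      atTop atBot := by
  set n : ℕ → ℕ := fun K => (champernownePrefix b (b ^ K)).length
  have hsn : ∀ K, snRatio b (xiReal b 1 {n | 0 < n}) 0 (n K) =
      -(((b : ℝ) ^ K - 1) / √(2 * n K * Real.log (Real.log (n K))) / b) := by
    intro K
    have hid : ((n K : ℤ) : ℝ) - b * (champernownePrefix b (b ^ K)).count 0 = b ^ K - 1 := by
      exact_mod_cast champernownePrefix.length_sub_mul_count_zero hb K
    have hnum : ((champernownePrefix b (b ^ K)).count 0 : ℝ) - n K / b = -((b ^ K - 1) / b) := by
      field_simp
      linear_combination -hid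
    rw [snRatio, digCount_xiReal_length hb, hnum]
    ring
  have hn : Tendsto (fun K => (n K : ℝ)) atTop atTop :=
    tendsto_natCast_atTop_iff.2 (champernownePrefix.tendsto_length_pow hb)
  have hup : ∀ K, (n K : ℝ) ≤ K * (b : ℝ) ^ K := fun K => by
    exact_mod_cast champernownePrefix.length_pow_le hb K
  refine (tendsto_congr hsn).2 ?_
  exact tendsto_neg_atTop_atBot.comp
    ((tendsto_pow_sub_one_div_sqrt_two_mul_log_log (by exact_mod_cast hb) hn hup).atTop_div_const
      (by positivity))

end Champernowne

/-- **Belshaw–Borwein.** For every integer `b ≥ 2`, the base-`b` Champernowne number,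
obtained by concatenating the base-`b` digit strings of `1, 2, 3, …`, is not simply
strongly normal to the base `b`. -/
theorem champernowne_not_simplyStronglyNormal (b : ℕ) (hb : 2 ≤ b) :
    ¬ SimplyStronglyNormal b (xiReal b 1 {n : ℕ | 0 < n}) := by
  intro h
  have hbot : liminf (fun n => (snRatio b (xiReal b 1 {n | 0 < n}) 0 n : EReal)) atTop = ⊥ :=
    EReal.liminf_coe_eq_bot_of_tendsto_comp (champernownePrefix.tendsto_length_pow hb)
      (tendsto_snRatio_xiReal_length_pow hb)
  exact EReal.bot_ne_coe _ (hbot ▸ (h 0 (by omega)).2)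
end
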